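/- For all integers l ≥ 1 and m ≥ 2, the polynomial G_{l,m} = x·(y·x^l + z^{l+1})^m − z^{(l+1)·m + 1} in ℂ[x,y,z] is homogeneous of degree l·m + m + 1 and is irreducible in ℂ[x,y,z]. -/

import Mathlib

/-!
Viewed as a polynomial in `z` over `ℂ[x,y]`, `-G_{l,m}` is monic of degree `N = (l+1)m + 1`.
A monic polynomial is irreducible as soon as some specialization of its coefficients is, and
setting `x = 1` gives `(y + z^{l+1})^m - z^N`. The substitution `y ↦ y - z^{l+1}` turns this
into `y^m - z^N`, which is irreducible because `gcd(m, N) = 1`: after possibly swapping the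
variables `m` is odd, and then by Gauss's lemma and Capelli's criterion over `ℂ(z)` it suffices
that `z^N` is not a `p`-th power for a prime `p ∣ m`, which holds in the integrally closed ring
`ℂ[z]` for degree reasons.
-/

open MvPolynomial

/-- The polynomial `G_{l,m} = x·(y·x^l + z^{l+1})^m − z^{(l+1)·m + 1}` in `ℂ[x,y,z]`,
with variables `x = X 0`, `y = X 1`, `z = X 2`. -/
noncomputable def Gpoly (l m : ℕ) : MvPolynomial (Fin 3) ℂ :=
  X 0 * (X 1 * X 0 ^ l + X 2 ^ (l + 1)) ^ m - X 2 ^ ((l + 1) * m + 1)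

theorem irreducible_neg_iff {M : Type*} [Monoid M] [HasDistribNeg M] {a : M} :
    Irreducible (-a) ↔ Irreducible a :=
  (Associated.refl a).neg_left.irreducible_iff

namespace Polynomial

open scoped Polynomial.Bivariate

variable {K : Type*} [Field K]

theorem irreducible_X_pow_sub_C_X_pow_of_odd {a b : ℕ} (ha : Odd a) (hab : a.Coprime b) :
    Irreducible (Y ^ a - C (X ^ b) : K[X][Y]) := by
  have hmonic : (Y ^ a - C (X ^ b) : K[X][Y]).Monic := monic_X_pow_sub_C _ ha.pos.ne'
  rw [hmonic.irreducible_iff_irreducible_map_fraction_map (K := RatFunc K)]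
  simp only [Polynomial.map_sub, Polynomial.map_pow, map_X, map_C]
  refine X_pow_sub_C_irreducible_of_odd ha fun p hp hpa u hu => ?_
  obtain ⟨f, rfl⟩ := IsIntegrallyClosed.exists_algebraMap_eq_of_isIntegral_pow (R := K[X])
    hp.pos (hu ▸ isIntegral_algebraMap)
  have hfb : f ^ p = X ^ b := IsFractionRing.injective K[X] (RatFunc K) (by rw [map_pow, hu])
  have hpb : p ∣ b := ⟨f.natDegree, by simpa using (congrArg natDegree hfb).symm⟩
  exact hp.one_lt.ne' (Nat.dvd_one.mp (hab ▸ Nat.dvd_gcd hpa hpb))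

theorem irreducible_X_pow_sub_C_X_pow {a b : ℕ} (hab : a.Coprime b) :
    Irreducible (Y ^ a - C (X ^ b) : K[X][Y]) := by
  rcases Nat.even_or_odd a with ha | ha
  · have hb : Odd b := Nat.Coprime.odd_of_left (Nat.Coprime.coprime_dvd_left ha.two_dvd hab)
    have hswap : Bivariate.swap (Y ^ b - C (X ^ a) : K[X][Y]) = -(Y ^ a - C (X ^ b)) := by
      simp [Bivariate.swap_X, Bivariate.swap_Y]
    rw [← irreducible_neg_iff, ← hswap]
    exact (irreducible_X_pow_sub_C_X_pow_of_odd hb hab.symm).map Bivariate.swap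
  · exact irreducible_X_pow_sub_C_X_pow_of_odd ha hab

theorem irreducible_C_X_add_X_pow_pow_sub_X_pow (k : ℕ) {m n : ℕ} (hmn : m.Coprime n) :
    Irreducible ((C X + Y ^ k) ^ m - Y ^ n : K[X][Y]) := by
  have hshift : Bivariate.swap (algEquivAevalXAddC (X ^ k : K[X]) (Y ^ m - C (X ^ n))) =
      (C X + Y ^ k) ^ m - Y ^ n := by
    simp [Bivariate.swap_X, Bivariate.swap_Y]
  rw [← hshift]
  exact ((irreducible_X_pow_sub_C_X_pow hmn).map _).map _

end Polynomial

namespace Gpoly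

variable {R : Type*} [CommRing R]

/-- `R[x,y,z] ≃ R[y,x][z]`; in `MvPolynomial (Fin 2) R` the variable `X 0` is `y` and `X 1`
is `x`. -/
noncomputable def toPolynomialInZ :
    MvPolynomial (Fin 3) R ≃ₐ[R] Polynomial (MvPolynomial (Fin 2) R) :=
  (renameEquiv R (Equiv.swap 0 2)).trans (finSuccEquiv R 2)

@[simp]
theorem toPolynomialInZ_X_zero :
    toPolynomialInZ (X 0 : MvPolynomial (Fin 3) R) = Polynomial.C (X 1) := by
  simpa [toPolynomialInZ] using finSuccEquiv_X_succ (R := R) (j := (1 : Fin 2))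

@[simp]
theorem toPolynomialInZ_X_one :
    toPolynomialInZ (X 1 : MvPolynomial (Fin 3) R) = Polynomial.C (X 0) := by
  simpa [toPolynomialInZ, Equiv.swap_apply_of_ne_of_ne] using
    finSuccEquiv_X_succ (R := R) (j := (0 : Fin 2))

@[simp]
theorem toPolynomialInZ_X_two :
    toPolynomialInZ (X 2 : MvPolynomial (Fin 3) R) = Polynomial.X := by
  simp [toPolynomialInZ, finSuccEquiv_X_zero]

noncomputable def specializeXToOne : MvPolynomial (Fin 2) R →+* Polynomial R :=
  (aeval ![Polynomial.X, 1]).toRingHom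

theorem toPolynomialInZ_Gpoly (l m : ℕ) : toPolynomialInZ (Gpoly l m) =
    Polynomial.C (X 1) * (Polynomial.C (X 0 * X 1 ^ l) + Polynomial.X ^ (l + 1)) ^ m -
      Polynomial.X ^ ((l + 1) * m + 1) := by
  simp [Gpoly]

theorem monic_neg_toPolynomialInZ_Gpoly (l m : ℕ) : (-toPolynomialInZ (Gpoly l m)).Monic := by
  rw [toPolynomialInZ_Gpoly, neg_sub]
  monicity!
  simp [mul_comm m]

theorem map_specializeXToOne_toPolynomialInZ_Gpoly (l m : ℕ) :
    (toPolynomialInZ (Gpoly l m)).map specializeXToOne =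
      (Polynomial.C Polynomial.X + Polynomial.X ^ (l + 1)) ^ m -
        Polynomial.X ^ ((l + 1) * m + 1) := by
  simp [toPolynomialInZ_Gpoly, specializeXToOne]

end Gpoly

open Gpoly in
theorem irreducible_Gpoly (l m : ℕ) : Irreducible (Gpoly l m) := by
  have hcoprime : m.Coprime ((l + 1) * m + 1) := by simp
  have hspecial : Irreducible ((-toPolynomialInZ (Gpoly l m)).map specializeXToOne) := by
    rw [Polynomial.map_neg, irreducible_neg_iff (M := Polynomial (Polynomial ℂ)),
      map_specializeXToOne_toPolynomialInZ_Gpoly]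
    exact Polynomial.irreducible_C_X_add_X_pow_pow_sub_X_pow (l + 1) hcoprime
  have hneg := (monic_neg_toPolynomialInZ_Gpoly l m).irreducible_of_irreducible_map _ _ hspecial
  exact (MulEquiv.irreducible_iff toPolynomialInZ).mp (irreducible_neg_iff.mp hneg)

theorem isHomogeneous_Gpoly (l m : ℕ) : (Gpoly l m).IsHomogeneous (l * m + m + 1) := by
  have hbase : (X 1 * X 0 ^ l + X 2 ^ (l + 1) : MvPolynomial (Fin 3) ℂ).IsHomogeneous (l + 1) :=
    IsHomogeneous.add
      (by simpa [add_comm] using (isHomogeneous_X ℂ 1).mul (isHomogeneous_X_pow 0 l))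
      (isHomogeneous_X_pow _ _)
  have hG : (Gpoly l m).IsHomogeneous (1 + (l + 1) * m) :=
    ((isHomogeneous_X ℂ 0).mul (hbase.pow m)).sub
      (by simpa [add_comm] using isHomogeneous_X_pow (R := ℂ) 2 ((l + 1) * m + 1))
  convert hG using 1
  ring

theorem stmt_4_general (l m : ℕ) :
    (Gpoly l m).IsHomogeneous (l * m + m + 1) ∧ Irreducible (Gpoly l m) :=
  ⟨isHomogeneous_Gpoly l m, irreducible_Gpoly l m⟩

theorem stmt_4 (l m : ℕ) (hl : 1 ≤ l) (hm : 2 ≤ m) :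
    (Gpoly l m).IsHomogeneous (l * m + m + 1) ∧ Irreducible (Gpoly l m) :=
  stmt_4_general l m
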